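/- Let E be a self-dual Hilbert B-module (every bounded B-linear map E → B is represented by an inner product with a fixed element), let φ : B → C be an injective nondegenerate *-homomorphism with φ(B) = C, and let a : E → F be a bounded φ-linear map into a Hilbert C-module F. Then a has a φ-adjoint: there exists a* : F → E with ⟨y, ax⟩ = φ(⟨a*y, x⟩) for all x ∈ E, y ∈ F. -/

import Mathlib

/-!
Since `φ` is an injective *-homomorphism of C*-algebras it is isometric, so its inverse `ψ` is too.
For fixed `y`, the map `z ↦ ψ ⟪y, a z⟫` is then additive, `B`-linear and bounded (by Cauchy–Schwarz),
and self-duality writes it as `⟪a* y, ·⟫`.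
-/

open scoped RightActions InnerProductSpace

/-- The December 2024 Mathlib `CStarModule` (right Hilbert module: `SMul Aᵐᵒᵖ E`,
`⟪x, y <• a⟫ = ⟪x, y⟫ * a`); Mathlib's `CStarModule` is now a left module. -/
class RightCStarModule (A E : Type*) [NonUnitalSemiring A] [StarRing A] [Module ℂ A]
    [AddCommGroup E] [Module ℂ E] [PartialOrder A] [SMul Aᵐᵒᵖ E] [Norm A] [Norm E]
    extends Inner A E where
  inner_add_right {x} {y} {z} : inner x (y + z) = inner x y + inner x z
  inner_self_nonneg {x} : 0 ≤ inner x x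
  inner_self {x} : inner x x = 0 ↔ x = 0
  inner_op_smul_right {a : A} {x y : E} : inner x (y <• a) = inner x y * a
  inner_smul_right_complex {z : ℂ} {x} {y} : inner x (z • y) = z • inner x y
  star_inner x y : star (inner x y) = inner y x
  norm_eq_sqrt_norm_inner_self x : ‖x‖ = √‖inner x x‖

/-- A *-homomorphism `φ : B → C` is nondegenerate if the closed linear span of `φ(B)·C`
is all of `C`. -/
def Nondegenerate {B C : Type*} [NonUnitalCStarAlgebra B] [NonUnitalCStarAlgebra C]
    (φ : B →⋆ₙₐ[ℂ] C) : Prop :=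
  closure (Submodule.span ℂ {c : C | ∃ b c₀, c = φ b * c₀} : Set C) = Set.univ

/-- The range ideal `B_E` of a Hilbert `B`-module `E`: the closed linear span of all
inner products `⟪x, y⟫`. -/
def rangeIdeal (B E : Type*) [NonUnitalCStarAlgebra B] [PartialOrder B] [StarOrderedRing B]
    [NormedAddCommGroup E] [NormedSpace ℂ E] [SMul Bᵐᵒᵖ E] [RightCStarModule B E] : Set B :=
  closure (Submodule.span ℂ {b : B | ∃ x y : E, b = ⟪x, y⟫_B} : Set B)

variable {B C D E F G : Type*}
  [NonUnitalCStarAlgebra B] [PartialOrder B] [StarOrderedRing B]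
  [NonUnitalCStarAlgebra C] [PartialOrder C] [StarOrderedRing C]
  [NonUnitalCStarAlgebra D] [PartialOrder D] [StarOrderedRing D]
  [NormedAddCommGroup E] [NormedSpace ℂ E] [SMul Bᵐᵒᵖ E] [RightCStarModule B E]
  [NormedAddCommGroup F] [NormedSpace ℂ F] [SMul Cᵐᵒᵖ F] [RightCStarModule C F]
  [NormedAddCommGroup G] [NormedSpace ℂ G] [SMul Dᵐᵒᵖ G] [RightCStarModule D G]

namespace RightCStarModule

abbrev toCStarModuleMulOpposite : CStarModule Bᵐᵒᵖ E where
  inner x y := MulOpposite.op ⟪x, y⟫_B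
  inner_add_right {x y z} := by
    change MulOpposite.op ⟪x, y + z⟫_B = MulOpposite.op ⟪x, y⟫_B + MulOpposite.op ⟪x, z⟫_B
    rw [inner_add_right, MulOpposite.op_add]
  inner_self_nonneg := MulOpposite.op_le_op.mpr inner_self_nonneg
  inner_self := by simp only [MulOpposite.op_eq_zero_iff]; exact inner_self
  inner_op_smul_right {b x y} := by
    change MulOpposite.op ⟪x, y <• b.unop⟫_B = b * MulOpposite.op ⟪x, y⟫_B
    rw [inner_op_smul_right, MulOpposite.op_mul, MulOpposite.op_unop]
  inner_smul_right_complex {w x y} := by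
    change MulOpposite.op ⟪x, w • y⟫_B = w • MulOpposite.op ⟪x, y⟫_B
    rw [inner_smul_right_complex, MulOpposite.op_smul]
  star_inner x y := by
    change star (MulOpposite.op ⟪x, y⟫_B) = MulOpposite.op ⟪y, x⟫_B
    rw [← MulOpposite.op_star, star_inner]
  norm_eq_sqrt_norm_inner_self x := by
    rw [MulOpposite.norm_op]; exact norm_eq_sqrt_norm_inner_self x

/-- Cauchy–Schwarz, transported from Mathlib's left Hilbert modules over `Bᵐᵒᵖ`. -/
theorem norm_inner_le (x y : E) : ‖⟪x, y⟫_B‖ ≤ ‖x‖ * ‖y‖ := by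
  let _ := toCStarModuleMulOpposite (B := B) (E := E)
  rw [← MulOpposite.norm_op]
  exact CStarModule.norm_inner_le E (A := Bᵐᵒᵖ)

end RightCStarModule

theorem selfdual_phi_linear_adjointable_general
    (hsd : ∀ R : E → B, (∀ y z : E, R (y + z) = R y + R z) →
      (∀ (y : E) (b : B), R (y <• b) = R y * b) →
      (∃ M : ℝ, ∀ y : E, ‖R y‖ ≤ M * ‖y‖) → ∃ x : E, ∀ y : E, R y = ⟪x, y⟫_B)
    (φ : B →⋆ₙₐ[ℂ] C)
    (hinj : Function.Injective φ) (hsurj : Function.Surjective φ)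
    (a : E → F) (hadd : ∀ x y : E, a (x + y) = a x + a y)
    (hmod : ∀ (x : E) (b : B), a (x <• b) = a x <• φ b)
    (hbdd : ∃ M : ℝ, ∀ x : E, ‖a x‖ ≤ M * ‖x‖) :
    ∃ astar : F → E, ∀ (x : E) (y : F), ⟪y, a x⟫_C = φ ⟪astar y, x⟫_B := by
  obtain ⟨M, hM⟩ := hbdd
  set ψ : C → B := Function.surjInv hsurj
  have hφψ : ∀ c, φ (ψ c) = c := Function.surjInv_eq hsurj
  have hψ_norm : ∀ c, ‖ψ c‖ = ‖c‖ := fun c => by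
    rw [← NonUnitalStarAlgHom.norm_map φ hinj, hφψ]
  have represented : ∀ y : F, ∃ x : E, ∀ z : E, ψ ⟪y, a z⟫_C = ⟪x, z⟫_B := fun y => by
    refine hsd (fun z => ψ ⟪y, a z⟫_C) (fun z₁ z₂ => hinj ?_) (fun z b => hinj ?_)
      ⟨‖y‖ * M, fun z => ?_⟩
    · simp only [hφψ, map_add, hadd, RightCStarModule.inner_add_right]
    · simp only [hφψ, map_mul, hmod, RightCStarModule.inner_op_smul_right]
    · calc ‖ψ ⟪y, a z⟫_C‖ = ‖⟪y, a z⟫_C‖ := hψ_norm _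
        _ ≤ ‖y‖ * ‖a z‖ := RightCStarModule.norm_inner_le y (a z)
        _ ≤ ‖y‖ * (M * ‖z‖) := mul_le_mul_of_nonneg_left (hM z) (norm_nonneg y)
        _ = ‖y‖ * M * ‖z‖ := by ring
  choose astar hastar using represented
  exact ⟨astar, fun x y => by rw [← hastar y x, hφψ]⟩

/-- On a self-dual Hilbert module, every bounded φ-linear map with φ an injective
surjective nondegenerate *-homomorphism has a φ-adjoint. -/
theorem selfdual_phi_linear_adjointable
    (hsd : ∀ R : E → B, (∀ y z : E, R (y + z) = R y + R z) →
      (∀ (y : E) (b : B), R (y <• b) = R y * b) →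
      (∃ M : ℝ, ∀ y : E, ‖R y‖ ≤ M * ‖y‖) → ∃ x : E, ∀ y : E, R y = ⟪x, y⟫_B)
    (φ : B →⋆ₙₐ[ℂ] C) (hφ : Nondegenerate φ)
    (hinj : Function.Injective φ) (hsurj : Function.Surjective φ)
    (a : E → F) (hadd : ∀ x y : E, a (x + y) = a x + a y)
    (hmod : ∀ (x : E) (b : B), a (x <• b) = a x <• φ b)
    (hbdd : ∃ M : ℝ, ∀ x : E, ‖a x‖ ≤ M * ‖x‖) :
    ∃ astar : F → E, ∀ (x : E) (y : F), ⟪y, a x⟫_C = φ ⟪astar y, x⟫_B :=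
  selfdual_phi_linear_adjointable_general hsd φ hinj hsurj a hadd hmod hbdd
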